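/- arXiv:0809.0483 — 5 statements merged into one kernel-verified Lean document; each statement's English description precedes it below -/
import Mathlib

section
/- Let S(x,y) = ax² + bxy + cy² + O(|x|³+|y|³) be smooth with S(0,0)=0, ∇S(0,0)=0. If the Newton polygon of S has a vertex at (1,1) (i.e. b ≠ 0) and the coordinate system is superadapted, then a = 0 if and only if c = 0. -/
open MeasureTheory Set Filter

/-- The Taylor coefficient `s_{ab}` of `S` at the origin. -/
noncomputable def tCoeff (S : ℝ → ℝ → ℝ) (a b : ℕ) : ℝ :=
  iteratedDeriv b (fun y => iteratedDeriv a (fun x => S x y) 0) 0 /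
    ((Nat.factorial a : ℝ) * (Nat.factorial b : ℝ))

/-- The Newton polygon of `S`: the convex hull of the union of the quadrants
`(a,b) + ℝ²_{≥0}` over all `(a,b)` with nonzero Taylor coefficient. -/
noncomputable def newtonPolygon (S : ℝ → ℝ → ℝ) : Set (ℝ × ℝ) :=
  convexHull ℝ {q : ℝ × ℝ | ∃ p : ℕ × ℕ, tCoeff S p.1 p.2 ≠ 0 ∧
    (p.1 : ℝ) ≤ q.1 ∧ (p.2 : ℝ) ≤ q.2}

/-- The Newton distance `d(S) = inf {t : (t,t) ∈ N(S)}`. -/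
noncomputable def newtonDist (S : ℝ → ℝ → ℝ) : ℝ :=
  sInf {t : ℝ | (t, t) ∈ newtonPolygon S}

/-- `m, α` describe a compact edge of `N(S)`: the line `t₁ + m t₂ = α` with `m > 0` is a
supporting line of `N(S)` touching it in at least two points. -/
def IsCompactEdge (S : ℝ → ℝ → ℝ) (m α : ℝ) : Prop :=
  0 < m ∧ (∀ q ∈ newtonPolygon S, α ≤ q.1 + m * q.2) ∧
    ∃ q q' : ℝ × ℝ, q ∈ newtonPolygon S ∧ q' ∈ newtonPolygon S ∧ q ≠ q' ∧
      q.1 + m * q.2 = α ∧ q'.1 + m * q'.2 = α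

open Classical in
/-- `S_e(x,y)`: the sum of the Taylor terms of `S` whose exponents lie on the edge
`t₁ + m t₂ = α`. -/
noncomputable def edgePoly (S : ℝ → ℝ → ℝ) (m α x y : ℝ) : ℝ :=
  ∑' p : ℕ × ℕ, if (p.1 : ℝ) + m * (p.2 : ℝ) = α then
    tCoeff S p.1 p.2 * x ^ p.1 * y ^ p.2 else 0

/-- `f` has a zero of order at least `d` at `r`: all derivatives of order `< d` vanish. -/
def ZeroOfOrderGE (f : ℝ → ℝ) (r d : ℝ) : Prop :=
  f r = 0 ∧ ∀ j : ℕ, (j : ℝ) < d → iteratedDeriv j f r = 0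

/-- Superadapted coordinates: for every compact edge `e` of `N(S)` meeting the bisectrix,
neither `S_e(1,y)` nor `S_e(−1,y)` has a real zero of order `≥ d(S)` other than `y = 0`. -/
def IsSuperadapted (S : ℝ → ℝ → ℝ) : Prop :=
  ∀ m α : ℝ, IsCompactEdge S m α →
    (∃ t : ℝ, (t, t) ∈ newtonPolygon S ∧ t + m * t = α) →
    ∀ r : ℝ, r ≠ 0 →
      ¬ ZeroOfOrderGE (edgePoly S m α 1) r (newtonDist S) ∧
      ¬ ZeroOfOrderGE (edgePoly S m α (-1)) r (newtonDist S)


section Aux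

variable (S : ℝ → ℝ → ℝ)

lemma tCoeff00 (h0 : S 0 0 = 0) : tCoeff S 0 0 = 0 := by
  simp [tCoeff, iteratedDeriv_zero, h0]

lemma tCoeff10 (hS : ContDiff ℝ (⊤ : ℕ∞) (fun p : ℝ × ℝ => S p.1 p.2))
    (hgrad : fderiv ℝ (fun p : ℝ × ℝ => S p.1 p.2) (0, 0) = 0) :
    tCoeff S 1 0 = 0 := by
  have hF : HasFDerivAt (fun p : ℝ × ℝ => S p.1 p.2) (0 : ℝ × ℝ →L[ℝ] ℝ) ((0 : ℝ), (0 : ℝ)) := by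
    have h := ((hS.differentiable (by simp)) ((0:ℝ),(0:ℝ))).hasFDerivAt
    rwa [hgrad] at h
  have hg : HasDerivAt (fun x : ℝ => ((x, (0:ℝ)) : ℝ × ℝ)) ((1:ℝ), (0:ℝ)) 0 :=
    (hasDerivAt_id (0:ℝ)).prodMk (hasDerivAt_const (0:ℝ) (0:ℝ))
  have hcomp : HasDerivAt ((fun p : ℝ × ℝ => S p.1 p.2) ∘ (fun x : ℝ => ((x, (0:ℝ)) : ℝ × ℝ)))
      ((0 : ℝ × ℝ →L[ℝ] ℝ) (1, 0)) 0 := HasFDerivAt.comp_hasDerivAt (f := fun x : ℝ => ((x, (0:ℝ)) : ℝ × ℝ)) 0 hF hg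
  have hcomp' : HasDerivAt (fun x : ℝ => S x 0) ((0 : ℝ × ℝ →L[ℝ] ℝ) (1, 0)) 0 := hcomp
  have hd : deriv (fun x : ℝ => S x 0) 0 = 0 := by
    simpa using hcomp'.deriv
  simp [tCoeff, iteratedDeriv_zero, iteratedDeriv_one, hd]

lemma tCoeff01 (hS : ContDiff ℝ (⊤ : ℕ∞) (fun p : ℝ × ℝ => S p.1 p.2))
    (hgrad : fderiv ℝ (fun p : ℝ × ℝ => S p.1 p.2) (0, 0) = 0) :
    tCoeff S 0 1 = 0 := by
  have hF : HasFDerivAt (fun p : ℝ × ℝ => S p.1 p.2) (0 : ℝ × ℝ →L[ℝ] ℝ) ((0 : ℝ), (0 : ℝ)) := by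
    have h := ((hS.differentiable (by simp)) ((0:ℝ),(0:ℝ))).hasFDerivAt
    rwa [hgrad] at h
  have hg : HasDerivAt (fun y : ℝ => (((0:ℝ), y) : ℝ × ℝ)) ((0:ℝ), (1:ℝ)) 0 :=
    (hasDerivAt_const (0:ℝ) (0:ℝ)).prodMk (hasDerivAt_id (0:ℝ))
  have hcomp : HasDerivAt ((fun p : ℝ × ℝ => S p.1 p.2) ∘ (fun y : ℝ => (((0:ℝ), y) : ℝ × ℝ)))
      ((0 : ℝ × ℝ →L[ℝ] ℝ) (0, 1)) 0 := HasFDerivAt.comp_hasDerivAt (f := fun y : ℝ => (((0:ℝ), y) : ℝ × ℝ)) 0 hF hg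
  have hcomp' : HasDerivAt (fun y : ℝ => S 0 y) ((0 : ℝ × ℝ →L[ℝ] ℝ) (0, 1)) 0 := hcomp
  have hd : deriv (fun y : ℝ => S 0 y) 0 = 0 := by
    simpa using hcomp'.deriv
  have : (fun y : ℝ => iteratedDeriv 0 (fun x => S x y) 0) = fun y : ℝ => S 0 y := by
    funext y; simp [iteratedDeriv_zero]
  simp [tCoeff, this, iteratedDeriv_one, hd]

lemma np_bound (hS : ContDiff ℝ (⊤ : ℕ∞) (fun p : ℝ × ℝ => S p.1 p.2))
    (h0 : S 0 0 = 0)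
    (hgrad : fderiv ℝ (fun p : ℝ × ℝ => S p.1 p.2) (0, 0) = 0) :
    ∀ q ∈ newtonPolygon S, 2 ≤ q.1 + q.2 := by
  intro q hq
  have hconv : Convex ℝ {q : ℝ × ℝ | 2 ≤ q.1 + q.2} := by
    have hlin : IsLinearMap ℝ (fun q : ℝ × ℝ => q.1 + q.2) := by
      constructor
      · intro x y; simp [Prod.fst_add, Prod.snd_add]; ring
      · intro c x; simp [Prod.smul_fst, Prod.smul_snd, smul_eq_mul]; ring
    exact convex_halfSpace_ge hlin 2
  have hsub : {q : ℝ × ℝ | ∃ p : ℕ × ℕ, tCoeff S p.1 p.2 ≠ 0 ∧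
      (p.1 : ℝ) ≤ q.1 ∧ (p.2 : ℝ) ≤ q.2} ⊆ {q : ℝ × ℝ | 2 ≤ q.1 + q.2} := by
    rintro q ⟨p, hp, h1, h2⟩
    have hp2 : 2 ≤ p.1 + p.2 := by
      by_contra h
      push_neg at h
      have hcases : p = (0,0) ∨ p = (1,0) ∨ p = (0,1) := by
        rcases p with ⟨i, j⟩
        simp only [Prod.mk.injEq]
        omega
      rcases hcases with h' | h' | h' <;> subst h' <;>
        simp_all [tCoeff00 S h0, tCoeff10 S hS hgrad, tCoeff01 S hS hgrad]
    have : (2 : ℝ) ≤ (p.1 : ℝ) + (p.2 : ℝ) := by exact_mod_cast hp2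
    have hq' : 2 ≤ q.1 + q.2 := by linarith
    exact hq'
  exact convexHull_min hsub hconv hq

lemma mem_np (i j : ℕ) (h : tCoeff S i j ≠ 0) :
    ((i : ℝ), (j : ℝ)) ∈ newtonPolygon S :=
  subset_convexHull ℝ _ ⟨(i, j), h, le_refl _, le_refl _⟩

lemma nd_one (hS : ContDiff ℝ (⊤ : ℕ∞) (fun p : ℝ × ℝ => S p.1 p.2))
    (h0 : S 0 0 = 0)
    (hgrad : fderiv ℝ (fun p : ℝ × ℝ => S p.1 p.2) (0, 0) = 0)
    (hb : tCoeff S 1 1 ≠ 0) :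
    newtonDist S = 1 := by
  have hmem : (1 : ℝ) ∈ {t : ℝ | (t, t) ∈ newtonPolygon S} := by
    have := mem_np S 1 1 hb
    simpa using this
  have hlb : ∀ t ∈ {t : ℝ | (t, t) ∈ newtonPolygon S}, (1 : ℝ) ≤ t := by
    intro t ht
    have := np_bound S hS h0 hgrad (t, t) ht
    simp at this
    linarith
  exact le_antisymm (csInf_le ⟨1, hlb⟩ hmem) (le_csInf ⟨1, hmem⟩ hlb)

lemma edge_eval (x y : ℝ) :
    edgePoly S 1 2 x y =
      tCoeff S 2 0 * x ^ 2 + tCoeff S 1 1 * x * y + tCoeff S 0 2 * y ^ 2 := by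
  classical
  rw [edgePoly]
  rw [tsum_eq_sum (s := ({(2,0), (1,1), (0,2)} : Finset (ℕ × ℕ)))]
  · rw [show ({(2,0), (1,1), (0,2)} : Finset (ℕ × ℕ)) =
      insert (2,0) (insert (1,1) {(0,2)}) from rfl]
    rw [Finset.sum_insert (by decide), Finset.sum_insert (by decide),
      Finset.sum_singleton]
    norm_num
    ring
  · intro p hp
    rw [if_neg]
    intro h
    apply hp
    have hsum : p.1 + p.2 = 2 := by
      have h' : ((p.1 + p.2 : ℕ) : ℝ) = (2 : ℝ) := by push_cast; linarith
      exact_mod_cast h'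
    rcases p with ⟨i, j⟩
    simp only [Finset.mem_insert, Finset.mem_singleton, Prod.mk.injEq]
    simp at hsum
    omega

lemma zero_order_one (f : ℝ → ℝ) (r : ℝ) (hf : f r = 0) :
    ZeroOfOrderGE f r 1 := by
  refine ⟨hf, fun j hj => ?_⟩
  have hj0 : j = 0 := by
    by_contra h
    have : (1 : ℝ) ≤ (j : ℝ) := by exact_mod_cast Nat.one_le_iff_ne_zero.mpr h
    linarith
  subst hj0
  simpa [iteratedDeriv_zero] using hf

lemma edge_12 (hS : ContDiff ℝ (⊤ : ℕ∞) (fun p : ℝ × ℝ => S p.1 p.2))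
    (h0 : S 0 0 = 0)
    (hgrad : fderiv ℝ (fun p : ℝ × ℝ => S p.1 p.2) (0, 0) = 0)
    (hb : tCoeff S 1 1 ≠ 0)
    (q : ℝ × ℝ) (hq : q ∈ newtonPolygon S) (hne : q ≠ (1, 1))
    (hline : q.1 + q.2 = 2) :
    IsCompactEdge S 1 2 := by
  refine ⟨one_pos, fun q' hq' => ?_, q, (1, 1), hq, ?_, hne, ?_, ?_⟩
  · have := np_bound S hS h0 hgrad q' hq'
    linarith
  · simpa using mem_np S 1 1 hb
  · linarith
  · norm_num

end Aux

/-- If `S` is smooth with `S(0,0)=0`, `∇S(0,0)=0`, its Newton polygon has a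
vertex at `(1,1)` (i.e. `b = s₁₁ ≠ 0`), and the coordinate system is superadapted, then
the coefficients `a = s₂₀` and `c = s₀₂` satisfy `a = 0 ↔ c = 0`. -/
theorem stmt_0 (S : ℝ → ℝ → ℝ)
    (hS : ContDiff ℝ (⊤ : ℕ∞) (fun p : ℝ × ℝ => S p.1 p.2))
    (h0 : S 0 0 = 0)
    (hgrad : fderiv ℝ (fun p : ℝ × ℝ => S p.1 p.2) (0, 0) = 0)
    (hsuper : IsSuperadapted S)
    (hb : tCoeff S 1 1 ≠ 0) :
    tCoeff S 2 0 = 0 ↔ tCoeff S 0 2 = 0 := by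
  have nd := nd_one S hS h0 hgrad hb
  constructor
  · intro ha
    by_contra hc
    -- a = 0, c ≠ 0 : edge through (0,2) and (1,1); root r = -b/c of b y + c y²
    have hmem : (((0:ℕ) : ℝ), ((2:ℕ) : ℝ)) ∈ newtonPolygon S := mem_np S 0 2 hc
    have hedge : IsCompactEdge S 1 2 := by
      refine edge_12 S hS h0 hgrad hb ((0:ℝ), (2:ℝ)) (by simpa using hmem) ?_ (by norm_num)
      intro h
      have := congrArg Prod.fst h
      norm_num at this
    have hbis : ∃ t : ℝ, (t, t) ∈ newtonPolygon S ∧ t + 1 * t = 2 :=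
      ⟨1, by simpa using mem_np S 1 1 hb, by norm_num⟩
    set r : ℝ := -(tCoeff S 1 1) / tCoeff S 0 2 with hr
    have hrne : r ≠ 0 := by
      rw [hr]
      exact div_ne_zero (neg_ne_zero.mpr hb) hc
    have hz : edgePoly S 1 2 1 r = 0 := by
      rw [edge_eval, ha, hr]
      field_simp
      ring
    exact (hsuper 1 2 hedge hbis r hrne).1 (nd ▸ zero_order_one _ r hz)
  · intro hc
    by_contra ha
    -- c = 0, a ≠ 0 : edge through (2,0) and (1,1); root r = -a/b of a + b y
    have hmem : (((2:ℕ) : ℝ), ((0:ℕ) : ℝ)) ∈ newtonPolygon S := mem_np S 2 0 ha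
    have hedge : IsCompactEdge S 1 2 := by
      refine edge_12 S hS h0 hgrad hb ((2:ℝ), (0:ℝ)) (by simpa using hmem) ?_ (by norm_num)
      intro h
      have := congrArg Prod.fst h
      norm_num at this
    have hbis : ∃ t : ℝ, (t, t) ∈ newtonPolygon S ∧ t + 1 * t = 2 :=
      ⟨1, by simpa using mem_np S 1 1 hb, by norm_num⟩
    set r : ℝ := -(tCoeff S 2 0) / tCoeff S 1 1 with hr
    have hrne : r ≠ 0 := by
      rw [hr]
      exact div_ne_zero (neg_ne_zero.mpr ha) hb
    have hz : edgePoly S 1 2 1 r = 0 := by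
      rw [edge_eval, hc, hr]
      field_simp
      ring
    exact (hsuper 1 2 hedge hbis r hrne).1 (nd ▸ zero_order_one _ r hz)
end

section
/- Let S(x,y) be smooth near the origin with S(0,0)=0, ∇S(0,0)=0, in superadapted coordinates. Then the critical point of S at the origin is nondegenerate (nonzero Hessian determinant) if and only if the Newton distance d(S) equals 1. -/
open MeasureTheory Set Filter

-- aux lemmas
lemma polygon_bound (S : ℝ → ℝ → ℝ) (c₁ c₂ β : ℝ) (h1 : 0 ≤ c₁) (h2 : 0 ≤ c₂)
    (hgen : ∀ p : ℕ × ℕ, tCoeff S p.1 p.2 ≠ 0 → β ≤ c₁ * p.1 + c₂ * p.2) :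
    ∀ q ∈ newtonPolygon S, β ≤ c₁ * q.1 + c₂ * q.2 := by
  intro q hq
  have hlin : IsLinearMap ℝ fun w : ℝ × ℝ => c₁ * w.1 + c₂ * w.2 := by
    constructor
    · intro x y; simp [Prod.fst_add, Prod.snd_add]; ring
    · intro t x; simp [Prod.smul_fst, Prod.smul_snd, smul_eq_mul]; ring
  have hconv : Convex ℝ {w : ℝ × ℝ | β ≤ c₁ * w.1 + c₂ * w.2} :=
    convex_halfSpace_ge hlin β
  refine convexHull_min ?_ hconv hq
  rintro w ⟨p, hp, hpx, hpy⟩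
  have := hgen p hp
  have h3 : c₁ * (p.1:ℝ) ≤ c₁ * w.1 := mul_le_mul_of_nonneg_left hpx h1
  have h4 : c₂ * (p.2:ℝ) ≤ c₂ * w.2 := mul_le_mul_of_nonneg_left hpy h2
  simp only [Set.mem_setOf_eq]; linarith

lemma mem_polygon_of_coeff (S : ℝ → ℝ → ℝ) {a b : ℕ} (h : tCoeff S a b ≠ 0) :
    ((a : ℝ), (b : ℝ)) ∈ newtonPolygon S :=
  subset_convexHull ℝ _ ⟨(a, b), h, le_refl _, le_refl _⟩

lemma tCoeff_00 (S : ℝ → ℝ → ℝ) (h0 : S 0 0 = 0) : tCoeff S 0 0 = 0 := by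
  simp [tCoeff, iteratedDeriv_zero, h0]

lemma tCoeff_10 (S : ℝ → ℝ → ℝ)
    (hS : ContDiff ℝ (⊤ : ℕ∞) (fun p : ℝ × ℝ => S p.1 p.2))
    (hgrad : fderiv ℝ (fun p : ℝ × ℝ => S p.1 p.2) (0, 0) = 0) :
    tCoeff S 1 0 = 0 := by
  have hdiff : Differentiable ℝ (fun p : ℝ × ℝ => S p.1 p.2) := hS.differentiable (by simp)
  have hF : HasFDerivAt (fun p : ℝ × ℝ => S p.1 p.2)
      (fderiv ℝ (fun p : ℝ × ℝ => S p.1 p.2) (0, 0)) ((0:ℝ), (0:ℝ)) :=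
    (hdiff _).hasFDerivAt
  have hg : HasDerivAt (fun x : ℝ => (x, (0:ℝ))) ((1:ℝ), (0:ℝ)) 0 :=
    (hasDerivAt_id (0:ℝ)).prodMk (hasDerivAt_const (0:ℝ) (0:ℝ))
  have h1 : HasDerivAt (fun x : ℝ => S x 0)
      ((fderiv ℝ (fun p : ℝ × ℝ => S p.1 p.2) (0, 0)) (1, 0)) 0 := by
    have := HasFDerivAt.comp_hasDerivAt (f := fun x : ℝ => (x, (0:ℝ))) 0 hF hg
    exact this
  rw [hgrad] at h1
  simp only [ContinuousLinearMap.zero_apply] at h1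
  have : deriv (fun x : ℝ => S x 0) 0 = 0 := h1.deriv
  simp [tCoeff, iteratedDeriv_zero, iteratedDeriv_one, this]

lemma tCoeff_01 (S : ℝ → ℝ → ℝ)
    (hS : ContDiff ℝ (⊤ : ℕ∞) (fun p : ℝ × ℝ => S p.1 p.2))
    (hgrad : fderiv ℝ (fun p : ℝ × ℝ => S p.1 p.2) (0, 0) = 0) :
    tCoeff S 0 1 = 0 := by
  have hdiff : Differentiable ℝ (fun p : ℝ × ℝ => S p.1 p.2) := hS.differentiable (by simp)
  have hF : HasFDerivAt (fun p : ℝ × ℝ => S p.1 p.2)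
      (fderiv ℝ (fun p : ℝ × ℝ => S p.1 p.2) (0, 0)) ((0:ℝ), (0:ℝ)) :=
    (hdiff _).hasFDerivAt
  have hg : HasDerivAt (fun y : ℝ => ((0:ℝ), y)) ((0:ℝ), (1:ℝ)) 0 :=
    (hasDerivAt_const (0:ℝ) (0:ℝ)).prodMk (hasDerivAt_id (0:ℝ))
  have h1 : HasDerivAt (fun y : ℝ => S 0 y)
      ((fderiv ℝ (fun p : ℝ × ℝ => S p.1 p.2) (0, 0)) (0, 1)) 0 := by
    have := HasFDerivAt.comp_hasDerivAt (f := fun y : ℝ => ((0:ℝ), y)) 0 hF hg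
    exact this
  rw [hgrad] at h1
  simp only [ContinuousLinearMap.zero_apply] at h1
  have : deriv (fun y : ℝ => S 0 y) 0 = 0 := h1.deriv
  simp [tCoeff, iteratedDeriv_zero, iteratedDeriv_one, this]

lemma edgePoly_eval (S : ℝ → ℝ → ℝ) (h00 : tCoeff S 0 0 = 0) (x r : ℝ) :
    edgePoly S 1 2 x r = tCoeff S 2 0 * x ^ 2 + tCoeff S 1 1 * x * r + tCoeff S 0 2 * r ^ 2 := by
  classical
  have key : edgePoly S 1 2 x r = ∑ p ∈ ({(2,0),(1,1),(0,2)} : Finset (ℕ × ℕ)),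
      (if (p.1 : ℝ) + 1 * (p.2 : ℝ) = 2 then tCoeff S p.1 p.2 * x ^ p.1 * r ^ p.2 else 0) := by
    refine tsum_eq_sum ?_
    rintro ⟨u, v⟩ hp
    rw [if_neg]
    intro hcond
    have hnat : u + v = 2 := by
      have : (u : ℝ) + (v : ℝ) = 2 := by linarith [hcond, one_mul ((v:ℝ))] 
      exact_mod_cast this
    have : (u = 2 ∧ v = 0) ∨ (u = 1 ∧ v = 1) ∨ (u = 0 ∧ v = 2) := by omega
    rcases this with ⟨h1, h2⟩ | ⟨h1, h2⟩ | ⟨h1, h2⟩ <;> subst h1 <;> subst h2 <;>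
      simp at hp
  rw [key, Finset.sum_insert (by decide), Finset.sum_insert (by decide),
    Finset.sum_singleton]
  norm_num
  ring

/-- If `S` is smooth near the origin with `S(0,0)=0`, `∇S(0,0)=0`,
nonvanishing Taylor expansion, and is in superadapted coordinates, then the critical
point of `S` at the origin is nondegenerate (the Hessian determinant `4ac − b²` is
nonzero) if and only if the Newton distance `d(S)` equals `1`. -/
theorem stmt_1 (S : ℝ → ℝ → ℝ)
    (hS : ContDiff ℝ (⊤ : ℕ∞) (fun p : ℝ × ℝ => S p.1 p.2))
    (h0 : S 0 0 = 0)
    (hgrad : fderiv ℝ (fun p : ℝ × ℝ => S p.1 p.2) (0, 0) = 0)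
    (hnz : ∃ p : ℕ × ℕ, tCoeff S p.1 p.2 ≠ 0)
    (hsuper : IsSuperadapted S) :
    4 * tCoeff S 2 0 * tCoeff S 0 2 - (tCoeff S 1 1) ^ 2 ≠ 0 ↔ newtonDist S = 1 := by
  have h00 := tCoeff_00 S h0
  have h10 := tCoeff_10 S hS hgrad
  have h01 := tCoeff_01 S hS hgrad
  set a := tCoeff S 2 0 with ha_def
  set b := tCoeff S 1 1 with hb_def
  set c := tCoeff S 0 2 with hc_def
  -- every point of the polygon satisfies 2 ≤ q.1 + q.2
  have hsum2 : ∀ q ∈ newtonPolygon S, (2:ℝ) ≤ q.1 + q.2 := by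
    have := polygon_bound S 1 1 2 zero_le_one zero_le_one (by
      rintro ⟨u, v⟩ hp
      simp only [one_mul]
      have hn : 2 ≤ u + v := by
        by_contra hlt
        have : (u = 0 ∧ v = 0) ∨ (u = 1 ∧ v = 0) ∨ (u = 0 ∧ v = 1) := by omega
        rcases this with ⟨h1, h2⟩ | ⟨h1, h2⟩ | ⟨h1, h2⟩ <;> subst h1 <;> subst h2 <;>
          simp_all
      exact_mod_cast hn)
    intro q hq; have := this q hq; linarith
  -- the set defining the Newton distance
  have hne : {t : ℝ | (t, t) ∈ newtonPolygon S}.Nonempty := by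
    obtain ⟨p, hp⟩ := hnz
    refine ⟨(max p.1 p.2 : ℕ), subset_convexHull ℝ _ ⟨p, hp, ?_, ?_⟩⟩
    · show (p.1 : ℝ) ≤ ((max p.1 p.2 : ℕ) : ℝ)
      exact_mod_cast le_max_left p.1 p.2
    · show (p.2 : ℝ) ≤ ((max p.1 p.2 : ℕ) : ℝ)
      exact_mod_cast le_max_right p.1 p.2
  have hlb : ∀ t ∈ {t : ℝ | (t, t) ∈ newtonPolygon S}, (1:ℝ) ≤ t := by
    intro t ht
    have := hsum2 (t, t) ht
    simp at this; linarith
  have hbdd : BddBelow {t : ℝ | (t, t) ∈ newtonPolygon S} := ⟨1, hlb⟩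
  have hd_ge : (1:ℝ) ≤ newtonDist S := le_csInf hne hlb
  -- if (1,1) ∈ polygon then d = 1
  have hd_eq_of_mem : ((1:ℝ), (1:ℝ)) ∈ newtonPolygon S → newtonDist S = 1 := by
    intro h11
    exact le_antisymm (csInf_le hbdd h11) hd_ge
  have h11_of_b : b ≠ 0 → ((1:ℝ), (1:ℝ)) ∈ newtonPolygon S := by
    intro hb
    have := mem_polygon_of_coeff S (a := 1) (b := 1) hb
    simpa using this
  have h11_of_ac : a ≠ 0 → c ≠ 0 → ((1:ℝ), (1:ℝ)) ∈ newtonPolygon S := by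
    intro ha hc
    have h20 : ((2:ℝ), (0:ℝ)) ∈ newtonPolygon S := by
      have := mem_polygon_of_coeff S (a := 2) (b := 0) ha; simpa using this
    have h02 : ((0:ℝ), (2:ℝ)) ∈ newtonPolygon S := by
      have := mem_polygon_of_coeff S (a := 0) (b := 2) hc; simpa using this
    have hconv : Convex ℝ (newtonPolygon S) := convex_convexHull ℝ _
    have := hconv h20 h02 (by norm_num : (0:ℝ) ≤ 1/2) (by norm_num : (0:ℝ) ≤ 1/2)
      (by norm_num)
    convert this using 1
    simp [Prod.ext_iff, Prod.smul_fst, Prod.smul_snd, smul_eq_mul]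
  constructor
  · -- nondegenerate → d = 1
    intro hnd
    apply hd_eq_of_mem
    by_cases hb : b = 0
    · have hac : a ≠ 0 ∧ c ≠ 0 := by
        constructor <;> intro h <;> apply hnd
        · rw [h, hb]; ring
        · rw [h, hb]; ring
      exact h11_of_ac hac.1 hac.2
    · exact h11_of_b hb
  · -- d = 1 → nondegenerate
    intro hd1
    intro hdeg
    have hdeg' : 4 * a * c = b ^ 2 := by linarith
    by_cases hb : b = 0
    · -- then a = 0 or c = 0; derive d ≥ 6/5, contradiction
      have hac : a = 0 ∨ c = 0 := by
        rcases mul_eq_zero.mp (by rw [hb] at hdeg'; nlinarith : a * c = 0) with h | h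
        · exact Or.inl h
        · exact Or.inr h
      have hbound : ∃ c₁ c₂ : ℝ, 0 ≤ c₁ ∧ 0 ≤ c₂ ∧ c₁ + c₂ = 5 ∧
          ∀ q ∈ newtonPolygon S, (6:ℝ) ≤ c₁ * q.1 + c₂ * q.2 := by
        rcases hac with h | h
        · refine ⟨2, 3, by norm_num, by norm_num, by norm_num, ?_⟩
          refine polygon_bound S 2 3 6 (by norm_num) (by norm_num) ?_
          rintro ⟨u, v⟩ hp
          have hn : 6 ≤ 2 * u + 3 * v := by
            by_contra hlt
            have : (u = 0 ∧ v = 0) ∨ (u = 1 ∧ v = 0) ∨ (u = 2 ∧ v = 0) ∨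
                (u = 0 ∧ v = 1) ∨ (u = 1 ∧ v = 1) := by omega
            rcases this with ⟨h1, h2⟩ | ⟨h1, h2⟩ | ⟨h1, h2⟩ | ⟨h1, h2⟩ | ⟨h1, h2⟩ <;>
              subst h1 <;> subst h2 <;> simp_all
          exact_mod_cast hn
        · refine ⟨3, 2, by norm_num, by norm_num, by norm_num, ?_⟩
          refine polygon_bound S 3 2 6 (by norm_num) (by norm_num) ?_
          rintro ⟨u, v⟩ hp
          have hn : 6 ≤ 3 * u + 2 * v := by
            by_contra hlt
            have : (u = 0 ∧ v = 0) ∨ (u = 1 ∧ v = 0) ∨ (u = 0 ∧ v = 1) ∨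
                (u = 0 ∧ v = 2) ∨ (u = 1 ∧ v = 1) := by omega
            rcases this with ⟨h1, h2⟩ | ⟨h1, h2⟩ | ⟨h1, h2⟩ | ⟨h1, h2⟩ | ⟨h1, h2⟩ <;>
              subst h1 <;> subst h2 <;> simp_all
          exact_mod_cast hn
      obtain ⟨c₁, c₂, hc1, hc2, hc5, hq⟩ := hbound
      have hlb' : ∀ t ∈ {t : ℝ | (t, t) ∈ newtonPolygon S}, (6/5 : ℝ) ≤ t := by
        intro t ht
        have := hq (t, t) ht
        simp at this
        nlinarith
      have : (6/5 : ℝ) ≤ newtonDist S := le_csInf hne hlb'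
      rw [hd1] at this; norm_num at this
    · -- b ≠ 0: a ≠ 0, c ≠ 0, and the edge m=1, α=2 violates superadaptedness
      have ha : a ≠ 0 := by
        intro h
        apply hb
        have hb2 : b ^ 2 = 0 := by rw [← hdeg', h]; ring
        exact pow_eq_zero_iff (by norm_num : (2:ℕ) ≠ 0) |>.mp hb2
      have hc : c ≠ 0 := by
        intro h
        apply hb
        have hb2 : b ^ 2 = 0 := by rw [← hdeg', h]; ring
        exact pow_eq_zero_iff (by norm_num : (2:ℕ) ≠ 0) |>.mp hb2
      have h20 : ((2:ℝ), (0:ℝ)) ∈ newtonPolygon S := by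
        have := mem_polygon_of_coeff S (a := 2) (b := 0) ha; simpa using this
      have h02 : ((0:ℝ), (2:ℝ)) ∈ newtonPolygon S := by
        have := mem_polygon_of_coeff S (a := 0) (b := 2) hc; simpa using this
      have hedge : IsCompactEdge S 1 2 := by
        refine ⟨one_pos, ?_, (2, 0), (0, 2), h20, h02, ?_, by norm_num, by norm_num⟩
        · intro q hq; have := hsum2 q hq; linarith
        · simp [Prod.ext_iff]
      have h11 : ((1:ℝ), (1:ℝ)) ∈ newtonPolygon S := h11_of_b hb
      have hbis : ∃ t : ℝ, (t, t) ∈ newtonPolygon S ∧ t + 1 * t = 2 := ⟨1, h11, by norm_num⟩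
      set r : ℝ := -b / (2 * c) with hr_def
      have hr : r ≠ 0 := by
        apply div_ne_zero (neg_ne_zero.mpr hb)
        simp [hc]
      have hkey := (hsuper 1 2 hedge hbis r hr).1
      have hval : a + b * r + c * r ^ 2 = 0 := by
        rw [hr_def]
        field_simp
        linear_combination hdeg'
      apply hkey
      refine ⟨?_, ?_⟩
      · rw [edgePoly_eval S h00, ← ha_def, ← hb_def, ← hc_def]
        linear_combination hval
      · intro j hj
        rw [hd1] at hj
        have hj0 : j = 0 := Nat.lt_one_iff.mp (by exact_mod_cast hj)
        subst hj0
        rw [iteratedDeriv_zero, edgePoly_eval S h00, ← ha_def, ← hb_def, ← hc_def]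
        linear_combination hval
end

section
/- For real numbers 0 < m₂ < m₁ and δ₀ > 0, the two-dimensional Lebesgue measure of the set {(x,y) ∈ (0,δ₀]×(0,δ₀] : x^{m₁} < y < x^{m₂} and y < t/x} equals (1/(m₁+1) − 1/(m₂+1)) · t·ln(t) + O(t) as t → 0⁺. -/
/-!
Let `a = t ^ (m₂ + 1)⁻¹` and `b = t ^ (m₁ + 1)⁻¹` be the abscissae at which the hyperbola
`y = t / x` meets the curves `y = x ^ m₂` and `y = x ^ m₁`. Once `t` is small, the box constraints
are inactive and the set is exactly the region between `x ^ m₁` and `min (x ^ m₂) (t / x)` over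
`0 < x < b`. Its area is computed in closed form:
`a ^ (m₂ + 1) / (m₂ + 1) + t log (b / a) - b ^ (m₁ + 1) / (m₁ + 1)
  = (1/(m₁+1) − 1/(m₂+1)) t log t + (1/(m₂+1) − 1/(m₁+1)) t`.
-/

open MeasureTheory Set Filter Topology Real

section MinRpowDiv

variable {q t x b : ℝ}

theorem rpow_le_div_iff_le_rpow_inv (hx : 0 < x) (ht : 0 < t) (hq : -1 < q) :
    x ^ q ≤ t / x ↔ x ≤ t ^ (q + 1)⁻¹ := by
  rw [le_div_iff₀ hx, ← rpow_add_one hx.ne', le_rpow_inv_iff_of_pos hx.le ht.le (by linarith)]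

theorem div_le_rpow_iff_rpow_inv_le (hx : 0 < x) (ht : 0 < t) (hq : -1 < q) :
    t / x ≤ x ^ q ↔ t ^ (q + 1)⁻¹ ≤ x := by
  rw [div_le_iff₀ hx, ← rpow_add_one hx.ne', rpow_inv_le_iff_of_pos ht.le hx.le (by linarith)]

theorem eqOn_min_rpow_div_rpow (ht : 0 < t) (hq : -1 < q) :
    EqOn (fun x ↦ min (x ^ q) (t / x)) (fun x ↦ x ^ q) (Ioc 0 (t ^ (q + 1)⁻¹)) :=
  fun _ hx ↦ min_eq_left ((rpow_le_div_iff_le_rpow_inv hx.1 ht hq).2 hx.2)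

theorem eqOn_min_rpow_div_div (ht : 0 < t) (hq : -1 < q) :
    EqOn (fun x ↦ min (x ^ q) (t / x)) (fun x ↦ t / x) (Ici (t ^ (q + 1)⁻¹)) :=
  fun _ hx ↦ min_eq_right
    ((div_le_rpow_iff_rpow_inv_le ((rpow_pos_of_pos ht _).trans_le hx) ht hq).2 hx)

theorem intervalIntegrable_min_rpow_div (ht : 0 < t) (hq : -1 < q) (hb : t ^ (q + 1)⁻¹ ≤ b) :
    IntervalIntegrable (fun x ↦ min (x ^ q) (t / x)) volume 0 b := by
  have ha : 0 < t ^ (q + 1)⁻¹ := rpow_pos_of_pos ht _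
  refine IntervalIntegrable.trans (b := t ^ (q + 1)⁻¹) ?_ ?_
  · refine (intervalIntegral.intervalIntegrable_rpow' hq).congr fun x hx ↦ ?_
    exact (eqOn_min_rpow_div_rpow ht hq (uIoc_of_le ha.le ▸ hx)).symm
  · refine (ContinuousOn.intervalIntegrable (u := fun x ↦ t / x) ?_).congr fun x hx ↦ ?_
    · exact continuousOn_const.div continuousOn_id fun x hx ↦
        (ha.trans_le (uIcc_of_le hb ▸ hx).1).ne'
    · exact (eqOn_min_rpow_div_div ht hq (uIoc_of_le hb ▸ hx).1.le).symm

theorem integral_min_rpow_div (ht : 0 < t) (hq : -1 < q) (hb : t ^ (q + 1)⁻¹ ≤ b) :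
    ∫ x in 0..b, min (x ^ q) (t / x) = t / (q + 1) + t * log (b / t ^ (q + 1)⁻¹) := by
  set a := t ^ (q + 1)⁻¹
  have ha : 0 < a := rpow_pos_of_pos ht _
  have hg := intervalIntegrable_min_rpow_div ht hq hb
  have h0a : ∫ x in 0..a, min (x ^ q) (t / x) = t / (q + 1) := by
    rw [intervalIntegral.integral_congr_ae (g := fun x ↦ x ^ q) (ae_of_all _ fun x hx ↦
        eqOn_min_rpow_div_rpow ht hq (uIoc_of_le ha.le ▸ hx)),
      integral_rpow (Or.inl hq), zero_rpow (by linarith), sub_zero,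
      rpow_inv_rpow ht.le (by linarith)]
  have hab : ∫ x in a..b, min (x ^ q) (t / x) = t * log (b / a) := by
    rw [intervalIntegral.integral_congr_ae (g := fun x ↦ t * x⁻¹) (ae_of_all _ fun x hx ↦
        (eqOn_min_rpow_div_div ht hq (uIoc_of_le hb ▸ hx).1.le).trans (div_eq_mul_inv _ _)),
      intervalIntegral.integral_const_mul, integral_inv_of_pos ha (ha.trans_le hb)]
  have hmem : a ∈ uIcc 0 b := mem_uIcc_of_le ha.le hb
  rw [← intervalIntegral.integral_add_adjacent_intervals (hg.mono_set (uIcc_subset_uIcc_left hmem))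
    (hg.mono_set (uIcc_subset_uIcc_right hmem)), h0a, hab]

end MinRpowDiv

theorem volume_regionBetween_rpow_min_rpow_div {p q t : ℝ} (hq : -1 < q) (hqp : q ≤ p)
    (ht : 0 < t) (ht1 : t ≤ 1) :
    volume (regionBetween (fun x ↦ x ^ p) (fun x ↦ min (x ^ q) (t / x)) (Ioo 0 (t ^ (p + 1)⁻¹))) =
      ENNReal.ofReal ((1 / (p + 1) - 1 / (q + 1)) * (t * log t) + (1 / (q + 1) - 1 / (p + 1)) * t) := by
  set b := t ^ (p + 1)⁻¹
  have hp : -1 < p := hq.trans_le hqp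
  have hb : 0 < b := rpow_pos_of_pos ht _
  have hb1 : b ≤ 1 := rpow_le_one ht.le ht1 (inv_nonneg.2 (by linarith))
  have hab : t ^ (q + 1)⁻¹ ≤ b :=
    rpow_le_rpow_of_exponent_ge ht ht1 (inv_anti₀ (by linarith) (by linarith))
  have hf : IntervalIntegrable (fun x ↦ x ^ p) volume 0 b :=
    intervalIntegral.intervalIntegrable_rpow' hp
  have hg := intervalIntegrable_min_rpow_div ht hq hab
  have hfg : ∀ x ∈ Ioo 0 b, x ^ p ≤ min (x ^ q) (t / x) := fun x hx ↦
    le_min (rpow_le_rpow_of_exponent_ge hx.1 (hx.2.le.trans hb1) hqp)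
      ((rpow_le_div_iff_le_rpow_inv hx.1 ht hp).2 hx.2.le)
  rw [Measure.volume_eq_prod, volume_regionBetween_eq_integral
      ((intervalIntegrable_iff_integrableOn_Ioo_of_le hb.le).1 hf)
      ((intervalIntegrable_iff_integrableOn_Ioo_of_le hb.le).1 hg) measurableSet_Ioo hfg,
    ← integral_Ioc_eq_integral_Ioo, ← intervalIntegral.integral_of_le hb.le]
  simp only [Pi.sub_apply]
  rw [intervalIntegral.integral_sub hg hf, integral_min_rpow_div ht hq hab,
    integral_rpow (Or.inl hp), zero_rpow (by linarith), sub_zero, rpow_inv_rpow ht.le (by linarith),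
    log_div hb.ne' (rpow_pos_of_pos ht _).ne', log_rpow ht, log_rpow ht]
  congr 1
  field_simp
  ring

theorem boxed_region_eq_regionBetween {p q δ t : ℝ} (hp : -1 < p) (hq : 0 ≤ q) (ht : 0 < t)
    (hbδ : t ^ (p + 1)⁻¹ ≤ δ) (hbqδ : (t ^ (p + 1)⁻¹) ^ q ≤ δ) :
    {z : ℝ × ℝ | z.1 ∈ Ioc 0 δ ∧ z.2 ∈ Ioc 0 δ ∧ z.1 ^ p < z.2 ∧ z.2 < z.1 ^ q ∧ z.2 < t / z.1} =
      regionBetween (fun x ↦ x ^ p) (fun x ↦ min (x ^ q) (t / x)) (Ioo 0 (t ^ (p + 1)⁻¹)) := by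
  ext ⟨x, y⟩
  simp only [mem_ofPred_eq, regionBetween, mem_Ioo, mem_Ioc, lt_min_iff]
  constructor
  · rintro ⟨⟨hx, -⟩, -, hpy, hyq, hyt⟩
    refine ⟨⟨hx, lt_of_not_ge fun hbx ↦ ?_⟩, hpy, hyq, hyt⟩
    exact (hpy.trans hyt).not_ge ((div_le_rpow_iff_rpow_inv_le hx ht hp).2 hbx)
  · rintro ⟨⟨hx, hxb⟩, hpy, hyq, hyt⟩
    have hyδ : y ≤ δ := hyq.le.trans ((rpow_le_rpow hx.le hxb.le hq).trans hbqδ)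
    exact ⟨⟨hx, hxb.le.trans hbδ⟩, ⟨(rpow_pos_of_pos hx p).trans hpy, hyδ⟩, hpy, hyq, hyt⟩

theorem eventually_rpow_le_nhdsGT_zero {p ε : ℝ} (hp : 0 < p) (hε : 0 < ε) :
    ∀ᶠ t in 𝓝[>] 0, t ^ p ≤ ε := by
  have h := (continuousAt_rpow_const 0 p (Or.inr hp.le)).tendsto
  rw [zero_rpow hp.ne'] at h
  exact (h.mono_left nhdsWithin_le_nhds).eventually_le_const hε

/-- For `0 < m₂ < m₁` and `δ₀ > 0`, the planar Lebesgue measure of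
`{(x,y) ∈ (0,δ₀]×(0,δ₀] : x^{m₁} < y < x^{m₂}, y < t/x}` equals
`(1/(m₁+1) − 1/(m₂+1)) t ln t + O(t)` as `t → 0⁺`. -/
theorem stmt_3 (m₁ m₂ δ₀ : ℝ) (hm₂ : 0 < m₂) (hm : m₂ < m₁) (hδ₀ : 0 < δ₀) :
    ∃ C > 0, ∀ᶠ t in nhdsWithin (0 : ℝ) (Set.Ioi 0),
      |(volume {p : ℝ × ℝ | p.1 ∈ Set.Ioc 0 δ₀ ∧ p.2 ∈ Set.Ioc 0 δ₀ ∧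
            p.1 ^ m₁ < p.2 ∧ p.2 < p.1 ^ m₂ ∧ p.2 < t / p.1}).toReal
          - (1 / (m₁ + 1) - 1 / (m₂ + 1)) * (t * Real.log t)| ≤ C * t := by
  have hC : 0 < 1 / (m₂ + 1) - 1 / (m₁ + 1) :=
    sub_pos.2 (one_div_lt_one_div_of_lt (by linarith) (by linarith))
  have he : 0 < (m₁ + 1)⁻¹ := inv_pos.2 (by linarith)
  refine ⟨_, hC, ?_⟩
  filter_upwards [self_mem_nhdsWithin, eventually_rpow_le_nhdsGT_zero one_pos one_pos,
    eventually_rpow_le_nhdsGT_zero he hδ₀, eventually_rpow_le_nhdsGT_zero (mul_pos he hm₂) hδ₀]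
    with t (ht : 0 < t) ht1 hbδ hbqδ
  rw [rpow_one] at ht1
  rw [rpow_mul ht.le] at hbqδ
  have hlog : 0 ≤ (1 / (m₁ + 1) - 1 / (m₂ + 1)) * (t * log t) :=
    mul_nonneg_of_nonpos_of_nonpos (by linarith) (mul_nonpos_of_nonneg_of_nonpos ht.le
      (log_nonpos ht.le ht1))
  rw [boxed_region_eq_regionBetween (by linarith) hm₂.le ht hbδ hbqδ,
    volume_regionBetween_rpow_min_rpow_div (by linarith) hm.le ht ht1,
    ENNReal.toReal_ofReal (by positivity), add_sub_cancel_left, abs_of_nonneg (by positivity)]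
end

section
/- For real numbers m₂ > 0 and δ₀ > 0, the Lebesgue measure of {(x,y) ∈ (0,δ₀]×(0,δ₀] : 0 < y < x^{m₂} and y < t/x} equals −(1/(m₂+1)) · t·ln(t) + O(t) as t → 0⁺. -/
/-!
Slicing vertically, the region is the subgraph of `x ↦ min (x ^ m₂) (t / x)` over `(0, δ₀]`:
for small `t` the cap `y ≤ δ₀` is inactive, since that minimum never exceeds its value `x₀ ^ m₂`
at the crossover point `x₀ = t ^ (1 / (m₂ + 1))`, where `x₀ ^ (m₂ + 1) = t`. Splitting the integral
at `x₀` gives exactly `t / (m₂ + 1) + t log (δ₀ / x₀) = t / (m₂ + 1) + t log δ₀ - t log t / (m₂ + 1)`.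
-/

open MeasureTheory Set Filter Topology Real

section Crossover

variable {m x x₀ δ : ℝ}

lemma rpow_le_div_iff_rpow_add_one_le (hx : 0 < x) (t : ℝ) :
    x ^ m ≤ t / x ↔ x ^ (m + 1) ≤ t := by
  rw [le_div_iff₀ hx, rpow_add_one hx.ne']

lemma min_rpow_div_eq_rpow (hm : -1 < m) (hx : 0 < x) (hxx₀ : x ≤ x₀) :
    min (x ^ m) (x₀ ^ (m + 1) / x) = x ^ m :=
  min_eq_left <| (rpow_le_div_iff_rpow_add_one_le hx _).2 <|
    rpow_le_rpow hx.le hxx₀ (by linarith)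

lemma min_rpow_div_eq_div (hm : -1 < m) (hx₀ : 0 < x₀) (hxx₀ : x₀ ≤ x) :
    min (x ^ m) (x₀ ^ (m + 1) / x) = x₀ ^ (m + 1) / x := by
  have hx : 0 < x := hx₀.trans_le hxx₀
  refine min_eq_right ?_
  rw [div_le_iff₀ hx, ← rpow_add_one hx.ne']
  exact rpow_le_rpow hx₀.le hxx₀ (by linarith)

lemma min_rpow_div_le_rpow (hm : 0 ≤ m) (hx : 0 < x) (hx₀ : 0 < x₀) :
    min (x ^ m) (x₀ ^ (m + 1) / x) ≤ x₀ ^ m := by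
  rcases le_total x x₀ with hxx₀ | hx₀x
  · exact (min_le_left _ _).trans (rpow_le_rpow hx.le hxx₀ hm)
  · calc min (x ^ m) (x₀ ^ (m + 1) / x) ≤ x₀ ^ (m + 1) / x := min_le_right _ _
      _ ≤ x₀ ^ (m + 1) / x₀ := div_le_div_of_nonneg_left (by positivity) hx₀ hx₀x
      _ = x₀ ^ m := by rw [rpow_add_one hx₀.ne', mul_div_cancel_right₀ _ hx₀.ne']

lemma integrableOn_min_rpow_div (hm : -1 < m) (hx₀ : 0 < x₀) (hx₀δ : x₀ ≤ δ) :
    IntegrableOn (fun x ↦ min (x ^ m) (x₀ ^ (m + 1) / x)) (Ioc 0 δ) := by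
  rw [← Ioc_union_Ioc_eq_Ioc hx₀.le hx₀δ]
  refine IntegrableOn.union ?_ ?_
  · exact (intervalIntegral.intervalIntegrable_rpow' hm).1.congr_fun
      (fun x hx ↦ (min_rpow_div_eq_rpow hm hx.1 hx.2).symm) measurableSet_Ioc
  · refine IntegrableOn.congr_fun ?_ (fun x hx ↦ (min_rpow_div_eq_div hm hx₀ hx.1.le).symm)
      measurableSet_Ioc
    exact (ContinuousOn.integrableOn_Icc (continuousOn_const.div continuousOn_id
      fun x hx ↦ (hx₀.trans_le hx.1).ne')).mono_set Ioc_subset_Icc_self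

lemma integral_min_rpow_div_s4 (hm : -1 < m) (hx₀ : 0 < x₀) (hx₀δ : x₀ ≤ δ) :
    ∫ x in Ioc 0 δ, min (x ^ m) (x₀ ^ (m + 1) / x)
      = x₀ ^ (m + 1) / (m + 1) + x₀ ^ (m + 1) * log (δ / x₀) := by
  have hint := integrableOn_min_rpow_div hm hx₀ hx₀δ
  rw [← Ioc_union_Ioc_eq_Ioc hx₀.le hx₀δ] at hint ⊢
  rw [setIntegral_union (Ioc_disjoint_Ioc_of_le le_rfl) measurableSet_Ioc
      (hint.mono_set subset_union_left) (hint.mono_set subset_union_right),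
    setIntegral_congr_fun measurableSet_Ioc (fun x hx ↦ min_rpow_div_eq_rpow hm hx.1 hx.2),
    setIntegral_congr_fun measurableSet_Ioc (fun x hx ↦ min_rpow_div_eq_div hm hx₀ hx.1.le),
    ← intervalIntegral.integral_of_le hx₀.le, ← intervalIntegral.integral_of_le hx₀δ,
    integral_rpow (Or.inl hm), zero_rpow (by linarith), sub_zero]
  simp_rw [div_eq_mul_inv (x₀ ^ (m + 1))]
  rw [intervalIntegral.integral_const_mul, integral_inv_of_pos hx₀ (hx₀.trans_le hx₀δ)]

end Crossover

lemma tendsto_rpow_nhdsGT_zero {r : ℝ} (hr : 0 < r) :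
    Tendsto (fun t : ℝ ↦ t ^ r) (𝓝[>] 0) (𝓝 0) := by
  simpa [zero_rpow hr.ne'] using
    (continuousAt_rpow_const 0 r (Or.inr hr.le)).tendsto.mono_left nhdsWithin_le_nhds

lemma setOf_eq_regionBetween_min_rpow_div {m δ x₀ : ℝ} (hm : 0 ≤ m) (hx₀ : 0 < x₀)
    (hx₀δ : x₀ ^ m ≤ δ) :
    {p : ℝ × ℝ | p.1 ∈ Ioc 0 δ ∧ p.2 ∈ Ioc 0 δ ∧
        0 < p.2 ∧ p.2 < p.1 ^ m ∧ p.2 < x₀ ^ (m + 1) / p.1}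
      = regionBetween 0 (fun x ↦ min (x ^ m) (x₀ ^ (m + 1) / x)) (Ioc 0 δ) := by
  ext ⟨x, y⟩
  simp only [regionBetween, mem_ofPred_eq, mem_Ioc, mem_Ioo, Pi.zero_apply, lt_min_iff]
  constructor
  · rintro ⟨hx, ⟨hy, -⟩, -, hym, hyt⟩
    exact ⟨hx, hy, hym, hyt⟩
  · rintro ⟨hx, hy, hym, hyt⟩
    have hyδ : y ≤ δ :=
      ((lt_min hym hyt).trans_le ((min_rpow_div_le_rpow hm hx.1 hx₀).trans hx₀δ)).le
    exact ⟨hx, ⟨hy, hyδ⟩, hy, hym, hyt⟩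

lemma volume_setOf_toReal_eq {m δ t : ℝ} (hm : 0 ≤ m) (ht : 0 < t)
    (h₁ : t ^ (m + 1)⁻¹ ≤ δ) (h₂ : (t ^ (m + 1)⁻¹) ^ m ≤ δ) :
    (volume {p : ℝ × ℝ | p.1 ∈ Ioc 0 δ ∧ p.2 ∈ Ioc 0 δ ∧
        0 < p.2 ∧ p.2 < p.1 ^ m ∧ p.2 < t / p.1}).toReal
      = t / (m + 1) + t * log δ - (m + 1)⁻¹ * (t * log t) := by
  have hm₁ : 0 < m + 1 := by linarith
  set x₀ := t ^ (m + 1)⁻¹ with hx₀_def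
  have hx₀ : 0 < x₀ := rpow_pos_of_pos ht _
  have ht_eq : x₀ ^ (m + 1) = t := rpow_inv_rpow ht.le hm₁.ne'
  rw [← ht_eq, setOf_eq_regionBetween_min_rpow_div hm hx₀ h₂, Measure.volume_eq_prod,
    volume_regionBetween_eq_integral (f := 0) integrableOn_zero
      (integrableOn_min_rpow_div (by linarith) hx₀ h₁) measurableSet_Ioc
      (fun x hx ↦ (lt_min (rpow_pos_of_pos hx.1 _) (div_pos (by positivity) hx.1)).le)]
  simp only [Pi.sub_apply, Pi.zero_apply, sub_zero]
  rw [ENNReal.toReal_ofReal (setIntegral_nonneg measurableSet_Ioc fun x hx ↦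
      (lt_min (rpow_pos_of_pos hx.1 _) (div_pos (by positivity) hx.1)).le),
    integral_min_rpow_div_s4 (by linarith) hx₀ h₁, ht_eq, log_div (hx₀.trans_le h₁).ne' hx₀.ne',
    hx₀_def, log_rpow ht]
  ring

/-- For `m₂ > 0` and `δ₀ > 0`, the planar Lebesgue measure of
`{(x,y) ∈ (0,δ₀]×(0,δ₀] : 0 < y < x^{m₂}, y < t/x}` equals
`−(1/(m₂+1)) t ln t + O(t)` as `t → 0⁺`. -/
theorem stmt_4 (m₂ δ₀ : ℝ) (hm₂ : 0 < m₂) (hδ₀ : 0 < δ₀) :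
    ∃ C > 0, ∀ᶠ t in nhdsWithin (0 : ℝ) (Set.Ioi 0),
      |(volume {p : ℝ × ℝ | p.1 ∈ Set.Ioc 0 δ₀ ∧ p.2 ∈ Set.Ioc 0 δ₀ ∧
            0 < p.2 ∧ p.2 < p.1 ^ m₂ ∧ p.2 < t / p.1}).toReal
          - (-(1 / (m₂ + 1))) * (t * Real.log t)| ≤ C * t := by
  have hm₁ : 0 < m₂ + 1 := by linarith
  have hx₀ := tendsto_rpow_nhdsGT_zero (inv_pos.2 hm₁)
  have hx₀m : Tendsto (fun t : ℝ ↦ (t ^ (m₂ + 1)⁻¹) ^ m₂) (𝓝[>] 0) (𝓝 0) := by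
    simpa [Function.comp_def, zero_rpow hm₂.ne'] using
      (continuousAt_rpow_const 0 m₂ (Or.inr hm₂.le)).tendsto.comp hx₀
  refine ⟨1 / (m₂ + 1) + |log δ₀|, by positivity, ?_⟩
  filter_upwards [self_mem_nhdsWithin, hx₀.eventually (eventually_le_nhds hδ₀),
    hx₀m.eventually (eventually_le_nhds hδ₀)] with t (ht : 0 < t) h₁ h₂
  rw [volume_setOf_toReal_eq hm₂.le ht h₁ h₂]
  calc |t / (m₂ + 1) + t * log δ₀ - (m₂ + 1)⁻¹ * (t * log t) - -(1 / (m₂ + 1)) * (t * log t)|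
      = |t / (m₂ + 1) + t * log δ₀| := by congr 1; ring
    _ ≤ |t / (m₂ + 1)| + |t * log δ₀| := abs_add_le _ _
    _ = (1 / (m₂ + 1) + |log δ₀|) * t := by
      rw [abs_of_pos (by positivity), abs_mul, abs_of_pos ht]; ring
end

section
/- Let S_e(x,y) = Σ_{(a,b)∈F} s_{ab} x^a y^b be supported on lattice points on the line t₁ + m t₂ = α with m ≥ 1 a non-integer rational and α = (1+m)d for some d > 0. Then every exponent b of y appearing satisfies b < 2d, and if S_e(1,y) = y^β R(y^c) for an integer c ≥ 2 and polynomial R, then every real zero of S_e(1,y) other than y = 0 has order less than d. -/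
/-!
Since `m > 1`, a lattice point of the line `t₁ + m t₂ = (1 + m) d` has
`t₂ ≤ (1 + m) d / m < 2 d`, so `deg S_e(1, y) < 2 d`. If `S_e(1, y) = y ^ β R(y ^ c)`, the map
`y ↦ y ^ c` is unramified away from `0`, so a nonzero root `r` has the same multiplicity as the
root `r ^ c` of `R`; that multiplicity is at most `deg R ≤ deg S_e(1, y) / c < d`.
-/

open Polynomial

namespace Polynomial

section Field

variable {K : Type*} [Field K]

theorem rootMultiplicity_pow (p : K[X]) (n : ℕ) (r : K) :
    rootMultiplicity r (p ^ n) = n * rootMultiplicity r p := by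
  classical
  rw [← count_roots, ← count_roots, roots_pow, Multiset.count_nsmul]

theorem rootMultiplicity_X_pow_sub_C_pow_self {c : ℕ} (hc : (c : K) ≠ 0) {r : K}
    (hr : r ≠ 0) :
    rootMultiplicity r (X ^ c - C (r ^ c)) = 1 := by
  have hsep := separable_X_pow_sub_C (r ^ c) hc (pow_ne_zero c hr)
  have hroot : (X ^ c - C (r ^ c)).IsRoot r := by simp [IsRoot]
  exact le_antisymm (rootMultiplicity_le_one_of_separable hsep r)
    ((rootMultiplicity_pos hsep.ne_zero).2 hroot)

theorem rootMultiplicity_comp_X_pow {c : ℕ} (hc : (c : K) ≠ 0) {r : K} (hr : r ≠ 0)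
    (R : K[X]) :
    rootMultiplicity r (R.comp (X ^ c)) = rootMultiplicity (r ^ c) R := by
  rcases eq_or_ne R 0 with rfl | hR
  · simp
  set k := rootMultiplicity (r ^ c) R
  set T := R /ₘ (X - C (r ^ c)) ^ k
  have hT : (T.comp (X ^ c)).eval r ≠ 0 := by
    rw [eval_comp, eval_pow, eval_X]
    exact eval_divByMonic_pow_rootMultiplicity_ne_zero _ hR
  have hfactor : R.comp (X ^ c) = (X ^ c - C (r ^ c)) ^ k * T.comp (X ^ c) := by
    conv_lhs => rw [← pow_mul_divByMonic_rootMultiplicity_eq R (r ^ c)]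
    rw [mul_comp, pow_comp, sub_comp, X_comp, C_comp]
  have hne : (X ^ c - C (r ^ c)) ^ k * T.comp (X ^ c) ≠ 0 :=
    mul_ne_zero (pow_ne_zero _ (separable_X_pow_sub_C _ hc (pow_ne_zero c hr)).ne_zero)
      fun h ↦ hT (by rw [h, eval_zero])
  rw [hfactor, rootMultiplicity_mul hne, rootMultiplicity_pow,
    rootMultiplicity_X_pow_sub_C_pow_self hc hr, rootMultiplicity_eq_zero hT, mul_one, add_zero]

theorem rootMultiplicity_le_natDegree (p : K[X]) (r : K) :
    rootMultiplicity r p ≤ p.natDegree := by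
  classical
  exact count_roots p ▸ (Multiset.count_le_card _ _).trans (card_roots' p)

theorem mul_rootMultiplicity_le_natDegree_of_eq_X_pow_mul_comp [CharZero K] {Q R : K[X]}
    {β c : ℕ} (hQ : Q = X ^ β * R.comp (X ^ c)) {r : K} (hr : r ≠ 0) :
    c * rootMultiplicity r Q ≤ Q.natDegree := by
  rcases eq_or_ne Q 0 with rfl | hQ0
  · simp
  rcases eq_or_ne c 0 with rfl | hc
  · simp
  have hc' : (c : K) ≠ 0 := Nat.cast_ne_zero.2 hc
  have hRc : R.comp (X ^ c) ≠ 0 := right_ne_zero_of_mul (hQ ▸ hQ0)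
  have hmult : rootMultiplicity r Q = rootMultiplicity (r ^ c) R := by
    rw [hQ, rootMultiplicity_mul (hQ ▸ hQ0), rootMultiplicity_comp_X_pow hc' hr,
      rootMultiplicity_eq_zero (by simp [IsRoot, hr]), zero_add]
  have hdeg : Q.natDegree = β + R.natDegree * c := by
    rw [hQ, natDegree_mul (pow_ne_zero β X_ne_zero) hRc, natDegree_X_pow, natDegree_comp,
      natDegree_X_pow]
  rw [hmult, hdeg]
  nlinarith [rootMultiplicity_le_natDegree R (r ^ c)]

end Field

theorem exists_mem_eq_natDegree_of_sum_C_mul_X_pow_ne_zero {ι R : Type*} [Semiring R]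
    {F : Finset ι} {s : ι → R} {e : ι → ℕ} (h : ∑ i ∈ F, C (s i) * X ^ e i ≠ 0) :
    ∃ i ∈ F, e i = (∑ i ∈ F, C (s i) * X ^ e i).natDegree := by
  have hlead := mt leadingCoeff_eq_zero.1 h
  rw [leadingCoeff, finsetSum_coeff] at hlead
  obtain ⟨i, hi, hne⟩ := Finset.exists_ne_zero_of_sum_ne_zero hlead
  refine ⟨i, hi, ?_⟩
  by_contra hei
  simp [Ne.symm hei] at hne

end Polynomial

theorem stmt_11_general (m d : ℝ) (hm1 : 1 ≤ m)
    (hmZ : ¬ ∃ n : ℤ, (n : ℝ) = m) (hd : 0 < d)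
    (F : Finset (ℕ × ℕ)) (s : ℕ × ℕ → ℝ)
    (hline : ∀ p ∈ F, (p.1 : ℝ) + m * (p.2 : ℝ) = (1 + m) * d)
    (Q : Polynomial ℝ) (hQ : Q = ∑ p ∈ F, Polynomial.C (s p) * X ^ p.2) :
    (∀ p ∈ F, (p.2 : ℝ) < 2 * d) ∧
    (∀ (β c : ℕ) (R : Polynomial ℝ), 2 ≤ c → Q = X ^ β * R.comp (X ^ c) →
      ∀ r : ℝ, r ≠ 0 → Q.eval r = 0 → (Q.rootMultiplicity r : ℝ) < d) := by
  have hm : 1 < m := hm1.lt_of_ne fun h ↦ hmZ ⟨1, by simp [h]⟩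
  have hexp : ∀ p ∈ F, (p.2 : ℝ) < 2 * d := by
    intro p hp
    nlinarith [hline p hp, mul_pos hd (sub_pos.2 hm), (p.1.cast_nonneg : (0 : ℝ) ≤ p.1)]
  refine ⟨hexp, fun β c R hc hfac r hr _ ↦ ?_⟩
  rcases eq_or_ne Q 0 with hQ0 | hQ0
  · simpa [hQ0] using hd
  have hdeg : (Q.natDegree : ℝ) < 2 * d := by
    obtain ⟨p, hp, hpdeg⟩ := exists_mem_eq_natDegree_of_sum_C_mul_X_pow_ne_zero (hQ ▸ hQ0)
    exact hQ ▸ hpdeg ▸ hexp p hp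
  have hmult : ((c * Q.rootMultiplicity r : ℕ) : ℝ) ≤ Q.natDegree :=
    Nat.cast_le.2 (mul_rootMultiplicity_le_natDegree_of_eq_X_pow_mul_comp hfac hr)
  have hc' : (2 : ℝ) ≤ c := by exact_mod_cast hc
  push_cast at hmult
  nlinarith [(Q.rootMultiplicity r).cast_nonneg (α := ℝ)]

/-- Let `S_e(x,y) = Σ_{(a,b)∈F} s_{ab} x^a y^b` be supported on lattice
points of the line `t₁ + m t₂ = (1+m)d` where `m ≥ 1` is a non-integer rational and
`d > 0`. Then every exponent `b` of `y` appearing satisfies `b < 2d`, and if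
`S_e(1,y) = y^β R(y^c)` with `c ≥ 2` an integer and `R` a polynomial, then every real
zero of `S_e(1,y)` other than `y = 0` has order less than `d`. -/
theorem stmt_11 (m d : ℝ) (hm1 : 1 ≤ m) (hmQ : ∃ q : ℚ, (q : ℝ) = m)
    (hmZ : ¬ ∃ n : ℤ, (n : ℝ) = m) (hd : 0 < d)
    (F : Finset (ℕ × ℕ)) (s : ℕ × ℕ → ℝ) (hs : ∀ p ∈ F, s p ≠ 0)
    (hline : ∀ p ∈ F, (p.1 : ℝ) + m * (p.2 : ℝ) = (1 + m) * d)
    (Q : Polynomial ℝ) (hQ : Q = ∑ p ∈ F, Polynomial.C (s p) * X ^ p.2) :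
    (∀ p ∈ F, (p.2 : ℝ) < 2 * d) ∧
    (∀ (β c : ℕ) (R : Polynomial ℝ), 2 ≤ c → Q = X ^ β * R.comp (X ^ c) →
      ∀ r : ℝ, r ≠ 0 → Q.eval r = 0 → (Q.rootMultiplicity r : ℝ) < d) :=
  stmt_11_general m d hm1 hmZ hd F s hline Q hQ
end
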